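/- Let σ be a 2×2 Hermitian complex matrix. Then its robustness of imaginarity in the computational basis equals twice the absolute value of the imaginary part of its off-diagonal entry: (1/2)‖σ − σᵀ‖₁ = 2·|Im σ₀₁|. -/

import Mathlib

/-! For Hermitian `σ`, `σ - σᵀ = -2 Im σ₀₁ • Y` with `Y` the Pauli matrix, which is unitary.
Hence `(σ - σᵀ)ᴴ (σ - σᵀ) = 4 (Im σ₀₁)² • 1`, whose square root `2 |Im σ₀₁| • 1` has trace
`4 |Im σ₀₁|`. -/

open Matrix Kronecker
open scoped ComplexOrder

/-- The positive semidefinite square root of a positive semidefinite matrix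
(the definition removed from Mathlib, restated with its old meaning). -/
noncomputable def Matrix.PosSemidef.sqrt {n : Type*} [Fintype n] [DecidableEq n] {𝕜 : Type*}
    [RCLike 𝕜] {A : Matrix n n 𝕜} (hA : A.PosSemidef) : Matrix n n 𝕜 :=
  hA.1.eigenvectorUnitary.1 * diagonal ((↑) ∘ (√·) ∘ hA.1.eigenvalues) *
  (star hA.1.eigenvectorUnitary : Matrix n n 𝕜)

/-- Trace norm of a square complex matrix: `Tr[sqrt(Aᴴ A)]`. -/
noncomputable def traceNorm {n : Type*} [Fintype n] [DecidableEq n]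
    (A : Matrix n n ℂ) : ℝ :=
  ((Matrix.posSemidef_conjTranspose_mul_self A).sqrt.trace).re

/-- Robustness of imaginarity: `(1/2) ‖ρ - ρᵀ‖₁`. -/
noncomputable def roi {n : Type*} [Fintype n] [DecidableEq n]
    (ρ : Matrix n n ℂ) : ℝ :=
  (1 / 2) * traceNorm (ρ - ρ.transpose)

namespace Matrix

variable {n 𝕜 : Type*} [Fintype n] [DecidableEq n] [RCLike 𝕜]

lemma IsHermitian.eigenvalues_eq_of_eq_smul_one {A : Matrix n n 𝕜} (hA : A.IsHermitian) {r : ℝ}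
    (h : A = (r : 𝕜) • 1) (i : n) : hA.eigenvalues i = r := by
  subst h
  have hii := congrFun (congrFun hA.conjStarAlgAut_star_eigenvectorUnitary i) i
  rw [map_smul, map_one] at hii
  simpa using hii.symm

lemma PosSemidef.sqrt_eq_smul_one {A : Matrix n n 𝕜} (hA : A.PosSemidef) {r : ℝ}
    (h : A = (r : 𝕜) • 1) : hA.sqrt = ((√r : ℝ) : 𝕜) • 1 := by
  have hdiag : diagonal ((↑) ∘ (√·) ∘ hA.1.eigenvalues) = ((√r : ℝ) : 𝕜) • (1 : Matrix n n 𝕜) := by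
    rw [smul_one_eq_diagonal]
    exact congrArg diagonal (funext fun i => by simp [hA.1.eigenvalues_eq_of_eq_smul_one h])
  rw [PosSemidef.sqrt, hdiag, Matrix.mul_smul, mul_one, smul_mul, ← Unitary.coe_star,
    Unitary.coe_mul_star_self]

def pauliY : Matrix (Fin 2) (Fin 2) ℂ := !![0, -Complex.I; Complex.I, 0]

lemma pauliY_conjTranspose_mul_self : pauliYᴴ * pauliY = 1 := by
  ext i j
  fin_cases i <;> fin_cases j <;> simp [pauliY, mul_apply]

lemma IsHermitian.sub_transpose_eq_smul_pauliY {σ : Matrix (Fin 2) (Fin 2) ℂ}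
    (hσ : σ.IsHermitian) : σ - σᵀ = ((-2 * (σ 0 1).im : ℝ) : ℂ) • pauliY := by
  have h10 : σ 1 0 = star (σ 0 1) := (hσ.apply 1 0).symm
  ext i j
  fin_cases i <;> fin_cases j <;> simp [pauliY, h10, Complex.ext_iff] <;> ring

end Matrix

lemma traceNorm_real_smul_of_conjTranspose_mul_self_eq_one {n : Type*} [Fintype n] [DecidableEq n]
    {U : Matrix n n ℂ} (hU : Uᴴ * U = 1) (c : ℝ) :
    traceNorm ((c : ℂ) • U) = |c| * Fintype.card n := by
  have hsq : ((c : ℂ) • U)ᴴ * ((c : ℂ) • U) = ((c ^ 2 : ℝ) : ℂ) • 1 := by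
    rw [conjTranspose_smul, smul_mul_smul_comm, hU]
    simp [sq]
  rw [traceNorm, PosSemidef.sqrt_eq_smul_one (r := c ^ 2) _ hsq, Real.sqrt_sq_eq_abs]
  simp

/-- For a 2×2 Hermitian matrix, the robustness of imaginarity in the
computational basis equals `2·|Im σ₀₁|`. -/
theorem stmt1 (σ : Matrix (Fin 2) (Fin 2) ℂ) (hσ : σ.IsHermitian) :
    roi σ = 2 * |(σ 0 1).im| := by
  rw [roi, hσ.sub_transpose_eq_smul_pauliY,
    traceNorm_real_smul_of_conjTranspose_mul_self_eq_one pauliY_conjTranspose_mul_self, abs_mul]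
  norm_num
  ring
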